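/- arXiv:1903.12218 — 5 statements merged into one kernel-verified Lean document; each statement's English description precedes it below -/
import Mathlib

section
/- The correlation measure C_A^{(2)} is monotone nonincreasing under local channels: for any bipartite state ρ_{AB} and any quantum channels Λ_A on A and Λ_B on B, C_A^{(2)}((Λ_A ⊗ Λ_B)(ρ_{AB})) ≤ C_A^{(2)}(ρ_{AB}). -/
open Matrix BigOperators ComplexOrder Kronecker

def IsDensity {n : Type*} [Fintype n] [DecidableEq n] (ρ : Matrix n n ℂ) : Prop :=
  ρ.PosSemidef ∧ ρ.trace = 1

noncomputable def traceNorm {d : ℕ} (A : Matrix (Fin d) (Fin d) ℂ) : ℝ :=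
  if h : A.IsHermitian then ∑ i, |h.eigenvalues i| else 0

noncomputable def ptraceA {dA dB : ℕ}
    (M : Matrix (Fin dA × Fin dB) (Fin dA × Fin dB) ℂ) : Matrix (Fin dB) (Fin dB) ℂ :=
  Matrix.of fun i j => ∑ a, M (a, i) (a, j)

/-- The correlation measure `C_A^{(2)}`: the supremum, over two-outcome POVMs on `A`
that are maximally entropic for `ρ` (both outcome probabilities equal `1/2`), of a
quarter of the trace distance of the two post-measurement states on `B`. -/
noncomputable def CA2 {dA dB : ℕ}
    (ρ : Matrix (Fin dA × Fin dB) (Fin dA × Fin dB) ℂ) : ℝ :=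
  sSup { x : ℝ | ∃ P₁ P₂ : Matrix (Fin dA) (Fin dA) ℂ,
    P₁.PosSemidef ∧ P₂.PosSemidef ∧ P₁ + P₂ = 1 ∧
    (ρ * (P₁ ⊗ₖ (1 : Matrix (Fin dB) (Fin dB) ℂ))).trace = 1/2 ∧
    (ρ * (P₂ ⊗ₖ (1 : Matrix (Fin dB) (Fin dB) ℂ))).trace = 1/2 ∧
    x = traceNorm ((2 : ℂ) • ptraceA (ρ * (P₁ ⊗ₖ (1 : Matrix (Fin dB) (Fin dB) ℂ)))
          - (2 : ℂ) • ptraceA (ρ * (P₂ ⊗ₖ (1 : Matrix (Fin dB) (Fin dB) ℂ)))) / 4 }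


/-! In the Heisenberg picture, measuring `P` on `A` after `Λ_A` is measuring `Λ_A†(P)` before it,
and `Λ_A†` is unital and positive, so it maps the equiprobable POVMs of `(Λ_A ⊗ Λ_B) ρ` to
equiprobable POVMs of `ρ` (equiprobability survives because `Λ_B` preserves traces). The two
post-measurement states of `B` are then `Λ_B` applied to those of `ρ` under the pulled-back POVM,
and the trace norm contracts under `Λ_B`: by duality `‖M‖₁ = max {Re tr (M X) : -1 ≤ X ≤ 1}`, and
`Λ_B†` preserves the operator interval `[-1, 1]`. -/

open scoped MatrixOrder

section Kraus

variable {n ι : Type*} [Fintype n] [Fintype ι]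

def krausMap (K : ι → Matrix n n ℂ) : Matrix n n ℂ →ₗ[ℂ] Matrix n n ℂ :=
  ∑ i, LinearMap.mulLeft ℂ (K i) ∘ₗ LinearMap.mulRight ℂ (K i)ᴴ

lemma krausMap_apply (K : ι → Matrix n n ℂ) (X : Matrix n n ℂ) :
    krausMap K X = ∑ i, K i * X * (K i)ᴴ := by
  simp [krausMap, Matrix.mul_assoc]

lemma krausMap_star_apply (K : ι → Matrix n n ℂ) (X : Matrix n n ℂ) :
    krausMap (star K) X = ∑ i, (K i)ᴴ * X * K i := by
  simp [krausMap_apply, star_eq_conjTranspose]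

lemma krausMap_mono (K : ι → Matrix n n ℂ) : Monotone (krausMap K) := fun X Y h => by
  simp only [krausMap_apply]
  exact Finset.sum_le_sum fun i _ => star_right_conjugate_le_conjugate h (K i)

lemma Matrix.PosSemidef.krausMap (K : ι → Matrix n n ℂ) {X : Matrix n n ℂ} (hX : X.PosSemidef) :
    (krausMap K X).PosSemidef := by
  have h := krausMap_mono K hX.nonneg
  rw [map_zero] at h
  exact h.posSemidef

lemma Matrix.IsHermitian.krausMap (K : ι → Matrix n n ℂ) {X : Matrix n n ℂ} (hX : X.IsHermitian) :
    (krausMap K X).IsHermitian := by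
  simp only [krausMap_apply, IsHermitian, conjTranspose_sum, conjTranspose_mul,
    conjTranspose_conjTranspose, hX.eq, Matrix.mul_assoc]

lemma krausMap_star_one [DecidableEq n] {K : ι → Matrix n n ℂ} (hK : ∑ i, (K i)ᴴ * K i = 1) :
    krausMap (star K) 1 = 1 := by
  simpa [krausMap_star_apply] using hK

lemma trace_krausMap_mul (K : ι → Matrix n n ℂ) (X Y : Matrix n n ℂ) :
    (krausMap K X * Y).trace = (X * krausMap (star K) Y).trace := by
  rw [krausMap_star_apply, krausMap_apply, Matrix.sum_mul, Matrix.mul_sum, trace_sum, trace_sum]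
  refine Finset.sum_congr rfl fun i _ => ?_
  simp only [Matrix.mul_assoc]
  rw [trace_mul_comm]
  simp only [Matrix.mul_assoc]

lemma trace_krausMap [DecidableEq n] {K : ι → Matrix n n ℂ} (hK : ∑ i, (K i)ᴴ * K i = 1)
    (X : Matrix n n ℂ) :
    (krausMap K X).trace = X.trace := by
  simpa [krausMap_star_one hK] using trace_krausMap_mul K X 1

lemma krausMap_star_mem_Icc [DecidableEq n] {K : ι → Matrix n n ℂ} (hK : ∑ i, (K i)ᴴ * K i = 1)
    {X : Matrix n n ℂ} (hX : X ∈ Set.Icc (-1) 1) : krausMap (star K) X ∈ Set.Icc (-1) 1 := by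
  have h := krausMap_star_one hK
  exact ⟨by simpa [h] using krausMap_mono (star K) hX.1,
    by simpa [h] using krausMap_mono (star K) hX.2⟩

end Kraus

section LoewnerInterval

open Unitary

variable {n : Type*} [DecidableEq n]

lemma re_diag_mem_Icc {Y : Matrix n n ℂ} (hY : Y ∈ Set.Icc (-1) 1) (i : n) :
    (Y i i).re ∈ Set.Icc (-1) 1 := by
  have h₁ := (Complex.nonneg_iff.mp ((Matrix.le_iff.mp hY.1).diag_nonneg (i := i))).1
  have h₂ := (Complex.nonneg_iff.mp ((Matrix.le_iff.mp hY.2).diag_nonneg (i := i))).1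
  simp only [Matrix.sub_apply, Matrix.neg_apply, one_apply_eq, Complex.sub_re, Complex.neg_re,
    Complex.one_re] at h₁ h₂
  exact ⟨by linarith, by linarith⟩

lemma diagonal_ofReal_mem_Icc {s : n → ℝ} (hs : ∀ i, s i ∈ Set.Icc (-1) 1) :
    diagonal (fun i => (s i : ℂ)) ∈ Set.Icc (-1) 1 := by
  have hpsd (t : n → ℝ) (ht : ∀ i, 0 ≤ t i) : (diagonal fun i => (t i : ℂ)).PosSemidef :=
    PosSemidef.diagonal fun i => Complex.zero_le_real.mpr (ht i)
  refine ⟨Matrix.le_iff.mpr ?_, Matrix.le_iff.mpr ?_⟩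
  · rw [show diagonal (fun i => (s i : ℂ)) - -1 = diagonal fun i => ((s i + 1 : ℝ) : ℂ) by
      ext i j; by_cases h : i = j <;> simp [h]]
    exact hpsd _ fun i => by linarith [(hs i).1]
  · rw [show 1 - diagonal (fun i => (s i : ℂ)) = diagonal fun i => ((1 - s i : ℝ) : ℂ) by
      ext i j; by_cases h : i = j <;> simp [h, one_apply]]
    exact hpsd _ fun i => by linarith [(hs i).2]

variable [Fintype n]

lemma Matrix.PosSemidef.trace_mul_nonneg {A B : Matrix n n ℂ} (hA : A.PosSemidef)
    (hB : B.PosSemidef) : 0 ≤ (A * B).trace := by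
  obtain ⟨S, rfl⟩ := CStarAlgebra.nonneg_iff_eq_star_mul_self.mp hB.nonneg
  rw [← Matrix.mul_assoc, trace_mul_comm, ← Matrix.mul_assoc]
  simpa [star_eq_conjTranspose] using (hA.mul_mul_conjTranspose_same S).trace_nonneg

lemma Matrix.PosSemidef.abs_re_trace_mul_le {A X : Matrix n n ℂ} (hA : A.PosSemidef)
    (hX : X ∈ Set.Icc (-1) 1) : |(A * X).trace.re| ≤ A.trace.re := by
  have h₁ := (Complex.nonneg_iff.mp (hA.trace_mul_nonneg (Matrix.le_iff.mp hX.1))).1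
  have h₂ := (Complex.nonneg_iff.mp (hA.trace_mul_nonneg (Matrix.le_iff.mp hX.2))).1
  simp only [sub_neg_eq_add, Matrix.mul_add, Matrix.mul_sub, Matrix.mul_one, trace_add,
    trace_sub, Complex.add_re, Complex.sub_re] at h₁ h₂
  exact abs_le.mpr ⟨by linarith, by linarith⟩

lemma conjStarAlgAut_mem_Icc (U : unitary (Matrix n n ℂ)) {X : Matrix n n ℂ}
    (hX : X ∈ Set.Icc (-1) 1) : conjStarAlgAut ℂ _ U X ∈ Set.Icc (-1) 1 := by
  have hmono {A B : Matrix n n ℂ} (h : A ≤ B) : conjStarAlgAut ℂ _ U A ≤ conjStarAlgAut ℂ _ U B :=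
    star_right_conjugate_le_conjugate h (U : Matrix n n ℂ)
  simpa using And.intro (hmono hX.1) (hmono hX.2)

lemma trace_conjStarAlgAut (U : unitary (Matrix n n ℂ)) (X : Matrix n n ℂ) :
    (conjStarAlgAut ℂ _ U X).trace = X.trace := by
  rw [conjStarAlgAut_apply, trace_mul_cycle, Unitary.coe_star_mul_self, Matrix.one_mul]

end LoewnerInterval

section TraceNormDuality

open Unitary

variable {d : ℕ}

lemma traceNorm_nonneg (A : Matrix (Fin d) (Fin d) ℂ) : 0 ≤ traceNorm A := by
  unfold traceNorm
  split_ifs <;> positivity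

lemma Matrix.IsHermitian.traceNorm_eq {A : Matrix (Fin d) (Fin d) ℂ} (hA : A.IsHermitian) :
    traceNorm A = ∑ i, |hA.eigenvalues i| :=
  dif_pos hA

lemma Matrix.IsHermitian.re_trace_mul_le_traceNorm {M X : Matrix (Fin d) (Fin d) ℂ}
    (hM : M.IsHermitian) (hX : X ∈ Set.Icc (-1) 1) : (M * X).trace.re ≤ traceNorm M := by
  -- in the eigenbasis of `M`, `tr (M X) = ∑ λᵢ Yᵢᵢ` with `Y` unitarily conjugate to `X`
  set U := hM.eigenvectorUnitary
  set Y := conjStarAlgAut ℂ _ (star U) X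
  have htr : (M * X).trace = (diagonal (RCLike.ofReal ∘ hM.eigenvalues) * Y).trace := by
    rw [← hM.conjStarAlgAut_star_eigenvectorUnitary, ← map_mul, trace_conjStarAlgAut]
  rw [htr, hM.traceNorm_eq, trace, Complex.re_sum]
  refine Finset.sum_le_sum fun i _ => ?_
  have hYi := re_diag_mem_Icc (conjStarAlgAut_mem_Icc (star U) hX) i
  simp only [diag_apply, diagonal_mul, Function.comp_apply]
  calc _ = hM.eigenvalues i * (Y i i).re := Complex.re_ofReal_mul _ _
    _ ≤ |hM.eigenvalues i * (Y i i).re| := le_abs_self _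
    _ ≤ |hM.eigenvalues i| := by
      rw [abs_mul]
      exact mul_le_of_le_one_right (abs_nonneg _) (abs_le.mpr hYi)

lemma Matrix.IsHermitian.exists_re_trace_mul_eq_traceNorm {M : Matrix (Fin d) (Fin d) ℂ}
    (hM : M.IsHermitian) : ∃ X ∈ Set.Icc (-1) 1, (M * X).trace.re = traceNorm M := by
  -- the sign of `M` attains the bound
  set U := hM.eigenvectorUnitary
  set S := diagonal fun i => ((SignType.sign (hM.eigenvalues i) : ℝ) : ℂ)
  refine ⟨conjStarAlgAut ℂ _ U S, conjStarAlgAut_mem_Icc U (diagonal_ofReal_mem_Icc fun i =>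
    by cases SignType.sign (hM.eigenvalues i) <;> norm_num), ?_⟩
  have hM' : M = conjStarAlgAut ℂ _ U (diagonal (RCLike.ofReal ∘ hM.eigenvalues)) :=
    hM.spectral_theorem
  rw [hM.traceNorm_eq]
  nth_rewrite 1 [hM']
  rw [← map_mul, trace_conjStarAlgAut, diagonal_mul_diagonal,
    trace_diagonal, Complex.re_sum]
  simp [← Complex.ofReal_mul, self_mul_sign]

lemma traceNorm_krausMap_le {ι : Type*} [Fintype ι] {K : ι → Matrix (Fin d) (Fin d) ℂ}
    (hK : ∑ i, (K i)ᴴ * K i = 1) {M : Matrix (Fin d) (Fin d) ℂ} (hM : M.IsHermitian) :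
    traceNorm (krausMap K M) ≤ traceNorm M := by
  obtain ⟨S, hS, hNS⟩ := (hM.krausMap K).exists_re_trace_mul_eq_traceNorm
  rw [← hNS, trace_krausMap_mul]
  exact hM.re_trace_mul_le_traceNorm (krausMap_star_mem_Icc hK hS)

lemma traceNorm_sub_le {A B : Matrix (Fin d) (Fin d) ℂ} (hA : A.PosSemidef) (hB : B.PosSemidef) :
    traceNorm (A - B) ≤ A.trace.re + B.trace.re := by
  obtain ⟨X, hX, hAB⟩ := (hA.isHermitian.sub hB.isHermitian).exists_re_trace_mul_eq_traceNorm
  rw [← hAB, Matrix.sub_mul, trace_sub, Complex.sub_re]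
  have hAX := abs_le.mp (hA.abs_re_trace_mul_le hX)
  have hBX := abs_le.mp (hB.abs_re_trace_mul_le hX)
  linarith

end TraceNormDuality

section PartialTrace

variable {dA dB : ℕ}

lemma ptraceA_eq_sum_submatrix (M : Matrix (Fin dA × Fin dB) (Fin dA × Fin dB) ℂ) :
    ptraceA M = ∑ a, M.submatrix (Prod.mk a) (Prod.mk a) := by
  ext i j
  simp [ptraceA, Matrix.sum_apply]

lemma ptraceA_sum {ι : Type*} (s : Finset ι)
    (M : ι → Matrix (Fin dA × Fin dB) (Fin dA × Fin dB) ℂ) :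
    ptraceA (∑ l ∈ s, M l) = ∑ l ∈ s, ptraceA (M l) := by
  ext i j
  simp only [ptraceA, Matrix.sum_apply, of_apply]
  exact Finset.sum_comm

lemma trace_ptraceA (M : Matrix (Fin dA × Fin dB) (Fin dA × Fin dB) ℂ) :
    (ptraceA M).trace = M.trace := by
  simp only [trace, ptraceA, diag_apply, of_apply, Fintype.sum_prod_type]
  exact Finset.sum_comm

lemma Matrix.PosSemidef.ptraceA {M : Matrix (Fin dA × Fin dB) (Fin dA × Fin dB) ℂ}
    (hM : M.PosSemidef) : (ptraceA M).PosSemidef := by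
  rw [ptraceA_eq_sum_submatrix]
  exact posSemidef_sum _ fun a _ => hM.submatrix _

lemma ptraceA_kronecker_one_mul_comm (A : Matrix (Fin dA) (Fin dA) ℂ)
    (M : Matrix (Fin dA × Fin dB) (Fin dA × Fin dB) ℂ) :
    ptraceA ((A ⊗ₖ (1 : Matrix (Fin dB) (Fin dB) ℂ)) * M)
      = ptraceA (M * (A ⊗ₖ (1 : Matrix (Fin dB) (Fin dB) ℂ))) := by
  ext i j
  simp only [ptraceA, of_apply, mul_apply, Fintype.sum_prod_type, kroneckerMap_apply, one_apply,
    mul_ite, ite_mul, mul_one, mul_zero, zero_mul, Finset.sum_ite_eq, Finset.sum_ite_eq',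
    Finset.mem_univ, if_true]
  rw [Finset.sum_comm]
  exact Finset.sum_congr rfl fun _ _ => Finset.sum_congr rfl fun _ _ => mul_comm _ _

lemma ptraceA_one_kronecker_mul (B : Matrix (Fin dB) (Fin dB) ℂ)
    (M : Matrix (Fin dA × Fin dB) (Fin dA × Fin dB) ℂ) :
    ptraceA (((1 : Matrix (Fin dA) (Fin dA) ℂ) ⊗ₖ B) * M) = B * ptraceA M := by
  ext i j
  simp only [ptraceA, of_apply, mul_apply, Fintype.sum_prod_type, kroneckerMap_apply, one_apply,
    ite_mul, one_mul, zero_mul, Finset.sum_ite_irrel, Finset.sum_const_zero, Finset.sum_ite_eq,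
    Finset.mem_univ, if_true, Finset.mul_sum]
  exact Finset.sum_comm

lemma ptraceA_mul_one_kronecker (B : Matrix (Fin dB) (Fin dB) ℂ)
    (M : Matrix (Fin dA × Fin dB) (Fin dA × Fin dB) ℂ) :
    ptraceA (M * ((1 : Matrix (Fin dA) (Fin dA) ℂ) ⊗ₖ B)) = ptraceA M * B := by
  ext i j
  simp only [ptraceA, of_apply, mul_apply, Fintype.sum_prod_type, kroneckerMap_apply, one_apply,
    ite_mul, mul_ite, one_mul, zero_mul, mul_zero, Finset.sum_ite_irrel, Finset.sum_const_zero,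
    Finset.sum_ite_eq', Finset.mem_univ, if_true, Finset.sum_mul]
  exact Finset.sum_comm

lemma ptraceA_kronecker_mul_mul_kronecker (A C : Matrix (Fin dA) (Fin dA) ℂ)
    (B D : Matrix (Fin dB) (Fin dB) ℂ) (M : Matrix (Fin dA × Fin dB) (Fin dA × Fin dB) ℂ) :
    ptraceA ((A ⊗ₖ B) * M * (C ⊗ₖ D))
      = B * ptraceA (M * ((C * A) ⊗ₖ (1 : Matrix (Fin dB) (Fin dB) ℂ))) * D := by
  have hAB : A ⊗ₖ B = ((1 : Matrix (Fin dA) (Fin dA) ℂ) ⊗ₖ B) * (A ⊗ₖ (1 : Matrix _ _ ℂ)) := by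
    rw [← mul_kronecker_mul, Matrix.one_mul, Matrix.mul_one]
  have hCD : C ⊗ₖ D = (C ⊗ₖ (1 : Matrix (Fin dB) (Fin dB) ℂ)) * ((1 : Matrix _ _ ℂ) ⊗ₖ D) := by
    rw [← mul_kronecker_mul, Matrix.one_mul, Matrix.mul_one]
  calc ptraceA ((A ⊗ₖ B) * M * (C ⊗ₖ D))
      = ptraceA ((1 ⊗ₖ B) * ((A ⊗ₖ 1) * (M * (C ⊗ₖ 1))) * (1 ⊗ₖ D)) := by
        rw [hAB, hCD]
        simp only [Matrix.mul_assoc]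
    _ = B * ptraceA (M * (C ⊗ₖ 1) * (A ⊗ₖ 1)) * D := by
        rw [ptraceA_mul_one_kronecker, ptraceA_one_kronecker_mul, ptraceA_kronecker_one_mul_comm]
    _ = B * ptraceA (M * ((C * A) ⊗ₖ 1)) * D := by
        rw [Matrix.mul_assoc M, ← mul_kronecker_mul, Matrix.mul_one]

end PartialTrace

section ConditionalState

variable {dA dB : ℕ}

/-- The unnormalised state of `B` after outcome `P` on `A`; `ρ_{B,i}` in the definition of `CA2` is
`2 • condState ρ P_i`. -/
noncomputable def condState (ρ : Matrix (Fin dA × Fin dB) (Fin dA × Fin dB) ℂ)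
    (P : Matrix (Fin dA) (Fin dA) ℂ) :
    Matrix (Fin dB) (Fin dB) ℂ :=
  ptraceA (ρ * (P ⊗ₖ (1 : Matrix (Fin dB) (Fin dB) ℂ)))

lemma trace_condState (ρ : Matrix (Fin dA × Fin dB) (Fin dA × Fin dB) ℂ)
    (P : Matrix (Fin dA) (Fin dA) ℂ) :
    (condState ρ P).trace = (ρ * (P ⊗ₖ (1 : Matrix (Fin dB) (Fin dB) ℂ))).trace :=
  trace_ptraceA _

lemma condState_sum {ι : Type*} (ρ : Matrix (Fin dA × Fin dB) (Fin dA × Fin dB) ℂ)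
    (s : Finset ι) (P : ι → Matrix (Fin dA) (Fin dA) ℂ) :
    condState ρ (∑ i ∈ s, P i) = ∑ i ∈ s, condState ρ (P i) := by
  have hkron : (∑ i ∈ s, P i) ⊗ₖ (1 : Matrix (Fin dB) (Fin dB) ℂ) = ∑ i ∈ s, P i ⊗ₖ 1 := by
    ext
    simp [Matrix.sum_apply, Finset.sum_mul]
  simp only [condState, hkron, Matrix.mul_sum, ptraceA_sum]

lemma Matrix.PosSemidef.condState {ρ : Matrix (Fin dA × Fin dB) (Fin dA × Fin dB) ℂ}
    {P : Matrix (Fin dA) (Fin dA) ℂ} (hρ : ρ.PosSemidef) (hP : P.PosSemidef) :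
    (condState ρ P).PosSemidef := by
  obtain ⟨S, rfl⟩ := CStarAlgebra.nonneg_iff_eq_star_mul_self.mp hP.nonneg
  have hsplit : (star S * S) ⊗ₖ (1 : Matrix (Fin dB) (Fin dB) ℂ)
      = (S ⊗ₖ (1 : Matrix (Fin dB) (Fin dB) ℂ))ᴴ * (S ⊗ₖ 1) := by
    rw [conjTranspose_kronecker, conjTranspose_one, ← mul_kronecker_mul, Matrix.mul_one,
      star_eq_conjTranspose]
  rw [_root_.condState, hsplit, ← Matrix.mul_assoc, ← ptraceA_kronecker_one_mul_comm,
    ← Matrix.mul_assoc]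
  exact (hρ.mul_mul_conjTranspose_same _).ptraceA

lemma condState_localChannel {ι κ : Type*} [Fintype ι] [Fintype κ]
    (ρ : Matrix (Fin dA × Fin dB) (Fin dA × Fin dB) ℂ) (E : ι → Matrix (Fin dA) (Fin dA) ℂ)
    (F : κ → Matrix (Fin dB) (Fin dB) ℂ) (P : Matrix (Fin dA) (Fin dA) ℂ) :
    condState (∑ k, ∑ l, (E k ⊗ₖ F l) * ρ * (E k ⊗ₖ F l)ᴴ) P
      = krausMap F (condState ρ (krausMap (star E) P)) := by
  have hterm (k : ι) (l : κ) :
      ptraceA ((E k ⊗ₖ F l) * ρ * (E k ⊗ₖ F l)ᴴ * (P ⊗ₖ (1 : Matrix (Fin dB) (Fin dB) ℂ)))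
        = F l * condState ρ ((E k)ᴴ * P * E k) * (F l)ᴴ := by
    rw [conjTranspose_kronecker, Matrix.mul_assoc _ _ (P ⊗ₖ 1), ← mul_kronecker_mul,
      Matrix.mul_one, ptraceA_kronecker_mul_mul_kronecker]
    rfl
  rw [condState, Finset.sum_mul, ptraceA_sum]
  simp only [Finset.sum_mul, ptraceA_sum, hterm]
  rw [Finset.sum_comm, krausMap_star_apply, condState_sum, krausMap_apply]
  simp only [Finset.mul_sum, Finset.sum_mul]

end ConditionalState

section CorrelationMeasure

variable {dA dB : ℕ}

structure IsEquiprobablePOVM (ρ : Matrix (Fin dA × Fin dB) (Fin dA × Fin dB) ℂ)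
    (P₁ P₂ : Matrix (Fin dA) (Fin dA) ℂ) : Prop where
  posSemidef_left : P₁.PosSemidef
  posSemidef_right : P₂.PosSemidef
  add_eq_one : P₁ + P₂ = 1
  trace_left : (ρ * (P₁ ⊗ₖ (1 : Matrix (Fin dB) (Fin dB) ℂ))).trace = 1 / 2
  trace_right : (ρ * (P₂ ⊗ₖ (1 : Matrix (Fin dB) (Fin dB) ℂ))).trace = 1 / 2

noncomputable def guessingAdvantage (ρ : Matrix (Fin dA × Fin dB) (Fin dA × Fin dB) ℂ)
    (P₁ P₂ : Matrix (Fin dA) (Fin dA) ℂ) : ℝ :=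
  traceNorm ((2 : ℂ) • condState ρ P₁ - (2 : ℂ) • condState ρ P₂) / 4

lemma guessingAdvantage_nonneg (ρ : Matrix (Fin dA × Fin dB) (Fin dA × Fin dB) ℂ)
    (P₁ P₂ : Matrix (Fin dA) (Fin dA) ℂ) : 0 ≤ guessingAdvantage ρ P₁ P₂ :=
  div_nonneg (traceNorm_nonneg _) zero_le_four

lemma guessingAdvantage_le_half {ρ : Matrix (Fin dA × Fin dB) (Fin dA × Fin dB) ℂ}
    {P₁ P₂ : Matrix (Fin dA) (Fin dA) ℂ} (hρ : ρ.PosSemidef) (hP : IsEquiprobablePOVM ρ P₁ P₂) :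
    guessingAdvantage ρ P₁ P₂ ≤ 1 / 2 := by
  have h₁ := (hρ.condState hP.posSemidef_left).smul (zero_le_two (α := ℂ))
  have h₂ := (hρ.condState hP.posSemidef_right).smul (zero_le_two (α := ℂ))
  have h := traceNorm_sub_le h₁ h₂
  simp only [trace_smul, trace_condState, hP.trace_left, hP.trace_right] at h
  norm_num at h
  rw [guessingAdvantage]
  linarith

lemma guessingAdvantage_le_CA2 {ρ : Matrix (Fin dA × Fin dB) (Fin dA × Fin dB) ℂ}
    {P₁ P₂ : Matrix (Fin dA) (Fin dA) ℂ} (hρ : ρ.PosSemidef) (hP : IsEquiprobablePOVM ρ P₁ P₂) :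
    guessingAdvantage ρ P₁ P₂ ≤ CA2 ρ := by
  refine le_csSup ⟨1 / 2, ?_⟩ ⟨P₁, P₂, hP.1, hP.2, hP.3, hP.4, hP.5, rfl⟩
  rintro _ ⟨Q₁, Q₂, h₁, h₂, h₃, h₄, h₅, rfl⟩
  exact guessingAdvantage_le_half hρ ⟨h₁, h₂, h₃, h₄, h₅⟩

lemma CA2_le {ρ : Matrix (Fin dA × Fin dB) (Fin dA × Fin dB) ℂ} {c : ℝ} (hc : 0 ≤ c)
    (h : ∀ P₁ P₂, IsEquiprobablePOVM ρ P₁ P₂ → guessingAdvantage ρ P₁ P₂ ≤ c) : CA2 ρ ≤ c := by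
  refine Real.sSup_le ?_ hc
  rintro _ ⟨P₁, P₂, h₁, h₂, h₃, h₄, h₅, rfl⟩
  exact h P₁ P₂ ⟨h₁, h₂, h₃, h₄, h₅⟩

lemma isEquiprobablePOVM_half {ρ : Matrix (Fin dA × Fin dB) (Fin dA × Fin dB) ℂ}
    (hρ : ρ.trace = 1) : IsEquiprobablePOVM ρ ((1 / 2 : ℂ) • 1) ((1 / 2 : ℂ) • 1) := by
  have htr : (ρ * (((1 / 2 : ℂ) • 1) ⊗ₖ (1 : Matrix (Fin dB) (Fin dB) ℂ))).trace = 1 / 2 := by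
    rw [smul_kronecker, one_kronecker_one, Matrix.mul_smul, Matrix.mul_one, trace_smul, hρ,
      smul_eq_mul, mul_one]
  have hpsd : ((1 / 2 : ℂ) • (1 : Matrix (Fin dA) (Fin dA) ℂ)).PosSemidef :=
    PosSemidef.one.smul one_half_pos.le
  exact ⟨hpsd, hpsd, by rw [← add_smul]; norm_num, htr, htr⟩

lemma CA2_nonneg {ρ : Matrix (Fin dA × Fin dB) (Fin dA × Fin dB) ℂ} (hρ : IsDensity ρ) :
    0 ≤ CA2 ρ :=
  (guessingAdvantage_nonneg _ _ _).trans
    (guessingAdvantage_le_CA2 hρ.1 (isEquiprobablePOVM_half hρ.2))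

variable {ι κ : Type*} [Fintype ι] [Fintype κ]

lemma IsEquiprobablePOVM.krausMap_star {ρ : Matrix (Fin dA × Fin dB) (Fin dA × Fin dB) ℂ}
    {E : ι → Matrix (Fin dA) (Fin dA) ℂ} (hE : ∑ k, (E k)ᴴ * E k = 1)
    {F : κ → Matrix (Fin dB) (Fin dB) ℂ} (hF : ∑ l, (F l)ᴴ * F l = 1)
    {P₁ P₂ : Matrix (Fin dA) (Fin dA) ℂ}
    (hP : IsEquiprobablePOVM (∑ k, ∑ l, (E k ⊗ₖ F l) * ρ * (E k ⊗ₖ F l)ᴴ) P₁ P₂) :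
    IsEquiprobablePOVM ρ (krausMap (star E) P₁) (krausMap (star E) P₂) where
  posSemidef_left := hP.posSemidef_left.krausMap _
  posSemidef_right := hP.posSemidef_right.krausMap _
  add_eq_one := by rw [← map_add, hP.add_eq_one, krausMap_star_one hE]
  trace_left := by
    rw [← trace_condState, ← trace_krausMap hF, ← condState_localChannel, trace_condState,
      hP.trace_left]
  trace_right := by
    rw [← trace_condState, ← trace_krausMap hF, ← condState_localChannel, trace_condState,
      hP.trace_right]

lemma guessingAdvantage_localChannel_le {ρ : Matrix (Fin dA × Fin dB) (Fin dA × Fin dB) ℂ}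
    (hρ : ρ.PosSemidef) (E : ι → Matrix (Fin dA) (Fin dA) ℂ)
    {F : κ → Matrix (Fin dB) (Fin dB) ℂ} (hF : ∑ l, (F l)ᴴ * F l = 1)
    {P₁ P₂ : Matrix (Fin dA) (Fin dA) ℂ} (hP₁ : P₁.PosSemidef) (hP₂ : P₂.PosSemidef) :
    guessingAdvantage (∑ k, ∑ l, (E k ⊗ₖ F l) * ρ * (E k ⊗ₖ F l)ᴴ) P₁ P₂
      ≤ guessingAdvantage ρ (krausMap (star E) P₁) (krausMap (star E) P₂) := by
  have hherm (P : Matrix (Fin dA) (Fin dA) ℂ) (hP : P.PosSemidef) :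
      ((2 : ℂ) • condState ρ (krausMap (star E) P)).IsHermitian :=
    ((hρ.condState (hP.krausMap _)).smul (zero_le_two (α := ℂ))).isHermitian
  simp only [guessingAdvantage, condState_localChannel, ← map_smul, ← map_sub]
  gcongr
  exact traceNorm_krausMap_le hF ((hherm P₁ hP₁).sub (hherm P₂ hP₂))

end CorrelationMeasure

/-- `C_A^{(2)}` is monotone nonincreasing under local channels `Λ_A ⊗ Λ_B`, with the
channels given by Kraus operators `E k` (on `A`) and `F l` (on `B`). -/
theorem CA2_monotone_local_channels (dA dB mA mB : ℕ)
    (ρ : Matrix (Fin dA × Fin dB) (Fin dA × Fin dB) ℂ) (hρ : IsDensity ρ)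
    (E : Fin mA → Matrix (Fin dA) (Fin dA) ℂ) (hE : ∑ k, (E k)ᴴ * E k = 1)
    (F : Fin mB → Matrix (Fin dB) (Fin dB) ℂ) (hF : ∑ l, (F l)ᴴ * F l = 1) :
    CA2 (∑ k, ∑ l, (E k ⊗ₖ F l) * ρ * (E k ⊗ₖ F l)ᴴ) ≤ CA2 ρ := by
  refine CA2_le (CA2_nonneg hρ) fun P₁ P₂ hP => ?_
  calc guessingAdvantage _ P₁ P₂
      ≤ guessingAdvantage ρ (krausMap (star E) P₁) (krausMap (star E) P₂) :=
        guessingAdvantage_localChannel_le hρ.1 E hF hP.posSemidef_left hP.posSemidef_right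
    _ ≤ CA2 ρ := guessingAdvantage_le_CA2 hρ.1 (hP.krausMap_star hE hF)
end

section
/- Let Λ_t be the qubit random unitary dynamics defined by Λ_t(σ_i) = λ_i(t) σ_i, Λ_t(1) = 1, and consider the mutual information I(φ⁺(t)) = 2 ln 2 + Σ_{k=0}^3 p_k(t) ln p_k(t) of the evolved maximally entangled state, where p_k(t) are the Bell-state eigenvalues. If p_k(t) is differentiable, p_0(t) ≥ p_k(t) for all k, and dp_k(t)/dt ≥ 0 for all k ∈ {1,2,3}, then dI(φ⁺(t))/dt ≤ 0 (no mutual-information backflow). -/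
/-!
The terms with `p_k(t) > 0` differentiate to `p_k' (ln p_k + 1)`. The terms with `p_k(t) = 0`
need not be differentiable, but each of them, `p_k ln p_k`, has a local maximum `0` at `t`; so
whenever `I` is differentiable they contribute nothing, and otherwise `deriv` is `0` anyway.
A vanishing `p_k` is at its minimum, so `p_k'(t) = 0` for it as well. Since `∑ p_k' = 0`,
the derivative equals `∑_{k ≥ 1} p_k' (ln p_k - ln p_0)`, a sum of nonpositive terms.
-/

open BigOperators Finset Real Filter

theorem IsLocalMax.finset_sum {ι : Type*} (u : Finset ι) {f : ι → ℝ → ℝ} {t : ℝ}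
    (h : ∀ i ∈ u, IsLocalMax (f i) t) : IsLocalMax (fun s => ∑ i ∈ u, f i s) t := by
  filter_upwards [u.eventually_all.2 h] with s hs using sum_le_sum hs

theorem deriv_add_of_isLocalMax {g h : ℝ → ℝ} {g' t : ℝ} (hg : HasDerivAt g g' t)
    (hh : IsLocalMax h t) (hgh : DifferentiableAt ℝ (fun s => g s + h s) t) :
    deriv (fun s => g s + h s) t = g' := by
  have hh_diff : DifferentiableAt ℝ h t := by
    simpa using hgh.fun_sub hg.differentiableAt
  rw [deriv_fun_add hg.differentiableAt hh_diff, hg.deriv, hh.deriv_eq_zero, add_zero]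

theorem deriv_eq_zero_of_nonneg_of_eq_zero {f : ℝ → ℝ} {t : ℝ} (hnn : ∀ s, 0 ≤ f s)
    (h0 : f t = 0) : deriv f t = 0 :=
  IsLocalMin.deriv_eq_zero (Eventually.of_forall fun s => h0 ▸ hnn s)

theorem isLocalMax_mul_log_of_eq_zero {f : ℝ → ℝ} {t : ℝ} (hf : ContinuousAt f t)
    (hnn : ∀ s, 0 ≤ f s) (h0 : f t = 0) : IsLocalMax (fun s => f s * log (f s)) t := by
  filter_upwards [hf.eventually_lt continuousAt_const (h0 ▸ zero_lt_one : f t < 1)] with s hs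
  simpa [h0] using mul_log_nonpos (hnn s) hs.le

theorem hasDerivAt_comp_mul_log {f : ℝ → ℝ} {f' t : ℝ} (hf : HasDerivAt f f' t)
    (ht : f t ≠ 0) :
    HasDerivAt (fun s => f s * log (f s)) (f' * (log (f t) + 1)) t := by
  simpa [mul_comm, Function.comp_def] using (hasDerivAt_mul_log ht).comp t hf

section Entropy

variable {ι : Type*} [Fintype ι] {p : ℝ → ι → ℝ} {t : ℝ}

theorem sum_deriv_eq_zero_of_sum_eq_const {c : ℝ} (hsum : ∀ s, ∑ k, p s k = c)
    (hdiff : ∀ k, DifferentiableAt ℝ (fun s => p s k) t) :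
    ∑ k, deriv (fun s => p s k) t = 0 := by
  rw [← deriv_fun_sum fun k _ => hdiff k, funext hsum, deriv_const]

theorem deriv_sum_mul_log (hpos : ∀ s k, 0 ≤ p s k)
    (hdiff : ∀ k, DifferentiableAt ℝ (fun s => p s k) t)
    (hF : DifferentiableAt ℝ (fun s => ∑ k, p s k * log (p s k)) t) :
    deriv (fun s => ∑ k, p s k * log (p s k)) t =
      ∑ k, deriv (fun s => p s k) t * (log (p t k) + 1) := by
  classical
  have hsplit : (fun s => ∑ k, p s k * log (p s k)) = fun s =>
      (∑ k with p t k ≠ 0, p s k * log (p s k)) + ∑ k with ¬p t k ≠ 0, p s k * log (p s k) :=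
    funext fun s => (sum_filter_add_sum_filter_not _ _ _).symm
  have hpositive : HasDerivAt (fun s => ∑ k with p t k ≠ 0, p s k * log (p s k))
      (∑ k with p t k ≠ 0, deriv (fun s => p s k) t * (log (p t k) + 1)) t :=
    HasDerivAt.fun_sum fun k hk =>
      hasDerivAt_comp_mul_log (hdiff k).hasDerivAt (mem_filter.1 hk).2
  have hzero : IsLocalMax (fun s => ∑ k with ¬p t k ≠ 0, p s k * log (p s k)) t :=
    IsLocalMax.finset_sum _ fun k hk =>
      isLocalMax_mul_log_of_eq_zero (hdiff k).continuousAt (hpos · k)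
        (not_not.1 (mem_filter.1 hk).2)
  rw [hsplit] at hF ⊢
  rw [deriv_add_of_isLocalMax hpositive hzero hF, sum_filter_of_ne]
  intro k _ hk hk0
  exact hk (by rw [deriv_eq_zero_of_nonneg_of_eq_zero (hpos · k) hk0, zero_mul])

end Entropy

theorem sum_mul_log_add_one_nonpos {ι : Type*} [Fintype ι] {p D : ι → ℝ} (i₀ : ι)
    (hsum : ∑ k, D k = 0) (hpos : ∀ k, 0 ≤ p k) (hmax : ∀ k, p k ≤ p i₀)
    (hmono : ∀ k, k ≠ i₀ → 0 ≤ D k) (hD0 : ∀ k, p k = 0 → D k = 0) :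
    ∑ k, D k * (log (p k) + 1) ≤ 0 := by
  have hshift : ∑ k, D k * (log (p k) + 1) = ∑ k, D k * (log (p k) - log (p i₀)) := by
    simp only [mul_add, mul_sub, sum_add_distrib, sum_sub_distrib, ← sum_mul, hsum, zero_mul,
      add_zero, sub_zero]
  rw [hshift]
  refine sum_nonpos fun k _ => ?_
  rcases eq_or_ne k i₀ with rfl | hk
  · simp
  rcases (hpos k).eq_or_lt with hzero | hpositive
  · simp [hD0 k hzero.symm]
  · exact mul_nonpos_of_nonneg_of_nonpos (hmono k hk)
      (sub_nonpos.2 (log_le_log hpositive (hmax k)))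

/-- For a Bell-diagonal evolved maximally entangled state with eigenvalues `p_k(t)`,
the mutual information is `I(t) = 2 ln 2 + ∑_k p_k(t) ln p_k(t)`.  If the `p_k` are
differentiable at `t`, `p_0(t) ≥ p_k(t)` for all `k`, and `dp_k/dt ≥ 0` for all
`k ∈ {1,2,3}`, then `dI/dt ≤ 0`: no mutual-information backflow. -/
theorem no_mutual_information_backflow (p : ℝ → Fin 4 → ℝ) (t : ℝ)
    (hpos : ∀ s k, 0 ≤ p s k) (hsum : ∀ s, ∑ k, p s k = 1)
    (hdiff : ∀ k, DifferentiableAt ℝ (fun s => p s k) t)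
    (hmax : ∀ k, p t k ≤ p t 0)
    (hmono : ∀ k, k ≠ 0 → 0 ≤ deriv (fun s => p s k) t) :
    deriv (fun s => 2 * Real.log 2 + ∑ k, p s k * Real.log (p s k)) t ≤ 0 := by
  rw [deriv_const_add]
  by_cases hF : DifferentiableAt ℝ (fun s => ∑ k, p s k * log (p s k)) t
  · rw [deriv_sum_mul_log hpos hdiff hF]
    exact sum_mul_log_add_one_nonpos 0 (sum_deriv_eq_zero_of_sum_eq_const hsum hdiff)
      (hpos t) hmax hmono fun k => deriv_eq_zero_of_nonneg_of_eq_zero (hpos · k)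
  · rw [deriv_zero_of_not_differentiableAt hF]
end

section
/- For the quasi-eternal non-Markovian model with parameters α > 0, t_0 ≥ 0, defined by A_{xy}(t) = e^{−2αt} and A_{yz}(t) = A_{zx}(t) = (e^{−t} cosh(t − t_0)/cosh(t_0))^α, the CPTP condition B_{xyz}(t) = 1 + A_{xy}(t) − 2A_{yz}(t) ≥ 0 holds for all t ≥ 0 if and only if t_0 ≥ (1/2) ln(2^{1/α} − 1) (equivalently 1 − 2(e^{2t_0}+1)^{−α} ≥ 0); the other two conditions B_{yzx}(t) = B_{zxy}(t) = 1 − e^{−2αt} ≥ 0 hold automatically. -/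
/-!
Put `u = e^{-2t} ∈ (0, 1]` and `w = (e^{2t₀} + 1)⁻¹ ≤ 1/2`. Then
`e^{-t} cosh(t - t₀) / cosh t₀ = w + (1 - w) u`, so `B_{xyz} = 1 + u^α - 2 (w + (1 - w) u)^α`,
whose value at `u = 0` is `1 - 2 w^α`; this gives necessity by continuity. For sufficiency one
shows `w + (1 - w) u ≤ M_α(1, u) = ((1 + u^α)/2)^{1/α}`. For `α ≥ 1` this follows from
`w + (1 - w) u ≤ (1 + u)/2 ≤ M_α(1, u)`. For `α ≤ 1` the hypothesis reads `w ≤ 2^{-1/α}`, and with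
`β = 1/α`, `v = u^α` the claim reduces to `1 + (2^β - 1) v^β ≤ (1 + v)^β` for `v ≤ 1`, i.e. to the
monotonicity of the increments `x ↦ (x + v)^β - x^β` of the convex function `x^β`.
-/

open Real Set

theorem ConvexOn.map_add_sub_map_le_of_le {𝕜 : Type*} [Field 𝕜] [LinearOrder 𝕜]
    [IsStrictOrderedRing 𝕜] {s : Set 𝕜} {f : 𝕜 → 𝕜} (hf : ConvexOn 𝕜 s f) {x y h : 𝕜}
    (hx : x ∈ s) (hyh : y + h ∈ s) (hxy : x ≤ y) (hh : 0 ≤ h) :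
    f (x + h) - f x ≤ f (y + h) - f y := by
  rcases hh.eq_or_lt with rfl | hh
  · simp
  have hxh : x + h ∈ s := hf.1.ordConnected.out hx hyh ⟨by linarith, by linarith⟩
  have hy : y ∈ s := hf.1.ordConnected.out hx hyh ⟨hxy, by linarith⟩
  have hleft : (f (x + h) - f x) / h ≤ (f (y + h) - f x) / (y + h - x) := by
    simpa using hf.secant_mono hx hxh hyh (by linarith) (by linarith) (by linarith)
  have hright : (f (y + h) - f x) / (y + h - x) ≤ (f (y + h) - f y) / h := by
    convert hf.secant_mono hyh hx hy (by linarith) (by linarith) hxy using 1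
    · rw [← neg_div_neg_eq, neg_sub, neg_sub]
    · rw [sub_add_cancel_left, div_neg, ← neg_div, neg_sub]
  exact (div_le_div_iff_of_pos_right hh).1 (hleft.trans hright)

theorem two_rpow_sub_one_mul_rpow_le_add_rpow_sub_rpow {β x y : ℝ} (hβ : 1 ≤ β)
    (hy : 0 ≤ y) (hyx : y ≤ x) : (2 ^ β - 1) * y ^ β ≤ (x + y) ^ β - x ^ β := by
  have h := (convexOn_rpow hβ).map_add_sub_map_le_of_le hy (by simp; linarith) hyx hy
  rwa [← two_mul, mul_rpow zero_le_two hy, ← sub_one_mul] at h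

theorem two_mul_rpow_le_one_add_rpow_of_one_le {α w u : ℝ} (hα : 1 ≤ α) (hw : 0 ≤ w)
    (hw2 : w ≤ 1 / 2) (hu : 0 ≤ u) (hu1 : u ≤ 1) :
    2 * (w + (1 - w) * u) ^ α ≤ 1 + u ^ α := by
  have hmid : w + (1 - w) * u ≤ (1 + u) / 2 := by nlinarith
  have hbase : 0 ≤ w + (1 - w) * u := by nlinarith
  have hconv := (convexOn_rpow hα).2 (mem_Ici.2 zero_le_one) (mem_Ici.2 hu)
    (by norm_num : (0 : ℝ) ≤ 1 / 2) (by norm_num : (0 : ℝ) ≤ 1 / 2) (by norm_num)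
  simp only [smul_eq_mul, one_rpow] at hconv
  calc 2 * (w + (1 - w) * u) ^ α ≤ 2 * ((1 + u) / 2) ^ α := by gcongr
    _ ≤ 1 + u ^ α := by
        rw [show (1 + u) / 2 = 1 / 2 * 1 + 1 / 2 * u by ring]
        linarith

theorem two_mul_rpow_le_one_add_rpow_of_le_one {α w u : ℝ} (hα0 : 0 < α) (hα : α ≤ 1)
    (hw : 0 ≤ w) (hwα : 2 * w ^ α ≤ 1) (hu : 0 ≤ u) (hu1 : u ≤ 1) :
    2 * (w + (1 - w) * u) ^ α ≤ 1 + u ^ α := by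
  set β := α⁻¹
  have hβ : 1 ≤ β := one_le_inv₀ hα0 |>.2 hα
  have hw_le : w ≤ (2 ^ β)⁻¹ := by
    rw [← inv_rpow zero_le_two, le_rpow_inv_iff_of_pos hw (by norm_num) hα0]
    linarith
  set v := u ^ α
  have hv : 0 ≤ v := rpow_nonneg hu α
  have hv1 : v ≤ 1 := rpow_le_one hu hu1 hα0.le
  have hu_eq : u = v ^ β := (rpow_rpow_inv hu hα0.ne').symm
  have hmean : w + (1 - w) * u ≤ ((1 + v) / 2) ^ β := by
    have h := two_rpow_sub_one_mul_rpow_le_add_rpow_sub_rpow hβ hv hv1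
    rw [one_rpow, ← hu_eq] at h
    have h2β : 0 < (2 : ℝ) ^ β := by positivity
    rw [div_rpow (by linarith) zero_le_two, le_div_iff₀ h2β]
    have hw2 : w * 2 ^ β ≤ 1 := by rwa [← le_div_iff₀ h2β, one_div]
    calc (w + (1 - w) * u) * 2 ^ β = u * 2 ^ β + w * 2 ^ β * (1 - u) := by ring
      _ ≤ u * 2 ^ β + 1 * (1 - u) := by gcongr
      _ ≤ (1 + v) ^ β := by linarith
  calc 2 * (w + (1 - w) * u) ^ α ≤ 2 * (((1 + v) / 2) ^ β) ^ α := by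
        gcongr
        nlinarith
    _ = 1 + v := by
        rw [rpow_inv_rpow (by positivity) hα0.ne']
        ring

theorem two_mul_rpow_le_one_add_rpow {α w u : ℝ} (hα : 0 < α) (hw : 0 ≤ w) (hw2 : w ≤ 1 / 2)
    (hwα : 2 * w ^ α ≤ 1) (hu : 0 ≤ u) (hu1 : u ≤ 1) :
    2 * (w + (1 - w) * u) ^ α ≤ 1 + u ^ α := by
  rcases le_total α 1 with hα1 | hα1
  · exact two_mul_rpow_le_one_add_rpow_of_le_one hα hα1 hw hwα hu hu1
  · exact two_mul_rpow_le_one_add_rpow_of_one_le hα1 hw hw2 hu hu1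

theorem two_mul_rpow_le_one_of_forall_Ioc {α w : ℝ} (hα : 0 < α)
    (h : ∀ u ∈ Ioc (0 : ℝ) 1, 0 ≤ 1 + u ^ α - 2 * (w + (1 - w) * u) ^ α) :
    2 * w ^ α ≤ 1 := by
  have hcont : Continuous fun u : ℝ => 1 + u ^ α - 2 * (w + (1 - w) * u) ^ α := by
    have := continuous_rpow_const hα.le
    fun_prop
  have h0 : (0 : ℝ) ∈ closure (Ioc 0 1) := by
    rw [closure_Ioc zero_ne_one]
    exact left_mem_Icc.2 zero_le_one
  have hzero := (isClosed_le continuous_const hcont).closure_subset_iff.2 h h0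
  simp only [mem_ofPred_eq, zero_rpow hα.ne', mul_zero, add_zero] at hzero
  linarith

theorem one_add_rpow_sub_two_mul_rpow_nonneg_on_Ioc_iff {α w : ℝ} (hα : 0 < α) (hw : 0 ≤ w)
    (hw2 : w ≤ 1 / 2) :
    (∀ u ∈ Ioc (0 : ℝ) 1, 0 ≤ 1 + u ^ α - 2 * (w + (1 - w) * u) ^ α) ↔ 2 * w ^ α ≤ 1 :=
  ⟨two_mul_rpow_le_one_of_forall_Ioc hα, fun hwα _ hu =>
    sub_nonneg.2 (two_mul_rpow_le_one_add_rpow hα hw hw2 hwα hu.1.le hu.2)⟩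

theorem forall_exp_neg_two_mul_iff {P : ℝ → Prop} :
    (∀ t ≥ (0 : ℝ), P (exp (-2 * t))) ↔ ∀ u ∈ Ioc (0 : ℝ) 1, P u := by
  refine ⟨fun h u hu => ?_, fun h t ht => h _ ⟨exp_pos _, exp_le_one_iff.2 (by linarith)⟩⟩
  have ht : 0 ≤ -log u / 2 := by
    have := log_nonpos hu.1.le hu.2
    linarith
  simpa [mul_div_cancel₀, exp_log hu.1] using h _ ht

theorem exp_neg_mul_cosh_sub_div_cosh (t t₀ : ℝ) :
    exp (-t) * cosh (t - t₀) / cosh t₀ =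
      (exp (2 * t₀) + 1)⁻¹ + (1 - (exp (2 * t₀) + 1)⁻¹) * exp (-2 * t) := by
  rw [cosh_eq, cosh_eq, show -(t - t₀) = t₀ - t by ring, exp_sub, exp_sub, exp_neg, exp_neg,
    show 2 * t₀ = t₀ + t₀ by ring, show -2 * t = -t + -t by ring, exp_add, exp_add, exp_neg]
  field_simp
  ring

theorem half_log_two_rpow_inv_sub_one_le_iff {α a : ℝ} (hα : 0 < α) :
    1 / 2 * log (2 ^ (1 / α) - 1) ≤ a ↔ 0 ≤ 1 - 2 * (exp (2 * a) + 1) ^ (-α) := by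
  have h1 : (1 : ℝ) < 2 ^ (1 / α) := one_lt_rpow one_lt_two (by positivity)
  have hc : 0 < exp (2 * a) + 1 := by positivity
  rw [one_div_mul_eq_div, div_le_iff₀' two_pos, log_le_iff_le_exp (by linarith),
    sub_le_iff_le_add, one_div, rpow_inv_le_iff_of_pos zero_le_two hc.le hα, rpow_neg hc.le,
    sub_nonneg, ← div_eq_mul_inv, div_le_one (by positivity)]

/-- The quasi-eternal non-Markovian model with `A_{xy}(t) = e^{-2αt}` and
`A_{yz}(t) = A_{zx}(t) = (e^{-t} cosh(t-t₀)/cosh t₀)^α`: the CPTP condition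
`B_{xyz}(t) = 1 + A_{xy}(t) - 2A_{yz}(t) ≥ 0` for all `t ≥ 0` holds iff
`t₀ ≥ (1/2) ln(2^{1/α} - 1)`, equivalently iff `1 - 2(e^{2t₀}+1)^{-α} ≥ 0`;
the remaining conditions `B_{yzx}(t) = B_{zxy}(t) = 1 - e^{-2αt} ≥ 0` hold
automatically. -/
theorem quasi_eternal_physicality (α t₀ : ℝ) (hα : 0 < α) (ht₀ : 0 ≤ t₀) :
    ((∀ t ≥ (0 : ℝ),
        0 ≤ 1 + Real.exp (-2 * α * t)
            - 2 * (Real.exp (-t) * Real.cosh (t - t₀) / Real.cosh t₀) ^ α) ↔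
      (1/2) * Real.log ((2 : ℝ) ^ (1/α) - 1) ≤ t₀) ∧
    ((∀ t ≥ (0 : ℝ),
        0 ≤ 1 + Real.exp (-2 * α * t)
            - 2 * (Real.exp (-t) * Real.cosh (t - t₀) / Real.cosh t₀) ^ α) ↔
      0 ≤ 1 - 2 * (Real.exp (2 * t₀) + 1) ^ (-α)) ∧
    (∀ t ≥ (0 : ℝ), 0 ≤ 1 - Real.exp (-2 * α * t)) := by
  set w := (exp (2 * t₀) + 1)⁻¹ with hw
  have hw0 : 0 ≤ w := by positivity
  have hw2 : w ≤ 1 / 2 := by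
    rw [hw, one_div]
    gcongr
    linarith [one_le_exp (by linarith : 0 ≤ 2 * t₀)]
  have hB (t : ℝ) : 1 + exp (-2 * α * t) - 2 * (exp (-t) * cosh (t - t₀) / cosh t₀) ^ α =
      1 + exp (-2 * t) ^ α - 2 * (w + (1 - w) * exp (-2 * t)) ^ α := by
    rw [exp_neg_mul_cosh_sub_div_cosh, ← exp_mul, mul_right_comm]
  have hlim : 2 * w ^ α ≤ 1 ↔ 0 ≤ 1 - 2 * (exp (2 * t₀) + 1) ^ (-α) := by
    rw [hw, inv_rpow (by positivity), ← rpow_neg (by positivity), sub_nonneg]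
  have hcptp : (∀ t ≥ (0 : ℝ), 0 ≤ 1 + exp (-2 * α * t)
      - 2 * (exp (-t) * cosh (t - t₀) / cosh t₀) ^ α) ↔
      0 ≤ 1 - 2 * (exp (2 * t₀) + 1) ^ (-α) := by
    simp only [hB]
    rw [forall_exp_neg_two_mul_iff (P := fun u => 0 ≤ 1 + u ^ α - 2 * (w + (1 - w) * u) ^ α),
      one_add_rpow_sub_two_mul_rpow_nonneg_on_Ioc_iff hα hw0 hw2, hlim]
  refine ⟨hcptp.trans (half_log_two_rpow_inv_sub_one_le_iff hα).symm, hcptp, fun t ht => ?_⟩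
  exact sub_nonneg.2 (exp_le_one_iff.2 (by nlinarith))
end

section
/- Let {Λ_t} be a family of completely positive trace-preserving maps on the space of 2×2 matrices. If the set of density matrices that are fixed points of every Λ_t has affine dimension at least 1 (i.e., contains two distinct states), then each Λ_t is unital: Λ_t(1) = 1. -/
open Matrix BigOperators ComplexOrder

/-- The Choi matrix of a map on qubit matrices; complete positivity is its
positive semidefiniteness. -/
noncomputable def choi (f : Matrix (Fin 2) (Fin 2) ℂ → Matrix (Fin 2) (Fin 2) ℂ) :
    Matrix (Fin 2 × Fin 2) (Fin 2 × Fin 2) ℂ :=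
  Matrix.of fun p q => f (Matrix.single p.1 q.1 1) p.2 q.2

/-!
A fixed point `ρ₁ - ρ₂` of a qubit channel is traceless Hermitian, so by Cayley–Hamilton a real
multiple `E` of it is a Hermitian involution; `(1 ± E) / 2` are then the complementary rank-one
projections onto antipodal points of the Bloch ball. With `θ = Λ 1 - 1`, positivity gives
`1 ± E + θ ≥ 0`. Compressing the first by `1 - E` and the second by `1 + E` leaves
`(1 ∓ E) θ (1 ∓ E) ≥ 0`, whose traces add up to `4 tr θ = 0`; so both compressions vanish, which
for a positive matrix forces `θ (1 ∓ E) = 0`, and adding the two gives `θ = 0`.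
-/

namespace Matrix

theorem mul_self_eq_neg_det_smul_one_of_trace_eq_zero {R : Type*} [CommRing R]
    {A : Matrix (Fin 2) (Fin 2) R} (htr : A.trace = 0) : A * A = (-A.det) • 1 := by
  have h11 : A 1 1 = -A 0 0 := by rw [trace_fin_two] at htr; linear_combination htr
  ext i j
  fin_cases i <;> fin_cases j <;> simp [mul_apply, det_fin_two, h11] <;> ring

variable {n 𝕜 : Type*} [RCLike 𝕜]

theorem IsHermitian.neg_det_eq_of_trace_eq_zero {δ : Matrix (Fin 2) (Fin 2) 𝕜}
    (hδ : δ.IsHermitian) (htr : δ.trace = 0) :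
    -δ.det = ((‖δ 0 0‖ ^ 2 + ‖δ 0 1‖ ^ 2 : ℝ) : 𝕜) := by
  have h00 : δ 0 0 = starRingEnd 𝕜 (δ 0 0) := (hδ.apply 0 0).symm
  have h10 : δ 1 0 = starRingEnd 𝕜 (δ 0 1) := (hδ.apply 1 0).symm
  have h11 : δ 1 1 = -δ 0 0 := by rw [trace_fin_two] at htr; linear_combination htr
  rw [det_fin_two, h10, h11]
  push_cast
  rw [← RCLike.mul_conj, ← RCLike.mul_conj, ← h00]
  ring

theorem IsHermitian.exists_smul_mul_self_eq_one {δ : Matrix (Fin 2) (Fin 2) 𝕜}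
    (hδ : δ.IsHermitian) (htr : δ.trace = 0) (hne : δ ≠ 0) :
    ∃ r : ℝ, (r • δ) * (r • δ) = 1 := by
  have hsq := mul_self_eq_neg_det_smul_one_of_trace_eq_zero htr
  rw [hδ.neg_det_eq_of_trace_eq_zero htr] at hsq
  set s := ‖δ 0 0‖ ^ 2 + ‖δ 0 1‖ ^ 2
  have hs : s ≠ 0 := by
    intro hs
    apply hne
    rw [← conjTranspose_mul_self_eq_zero, hδ.eq, hsq, hs, RCLike.ofReal_zero, zero_smul]
  refine ⟨(√s)⁻¹, ?_⟩
  rw [smul_mul_smul, hsq, ← RCLike.real_smul_eq_coe_smul (K := 𝕜), smul_smul, ← mul_inv,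
    Real.mul_self_sqrt (by positivity), inv_mul_cancel₀ hs, one_smul]

variable [Fintype n]

theorem PosSemidef.mul_eq_zero_of_conjTranspose_mul_mul_eq_zero {A B : Matrix n n 𝕜}
    (hA : A.PosSemidef) (h : Bᴴ * A * B = 0) : A * B = 0 := by
  classical
  open scoped MatrixOrder in
  obtain ⟨C, rfl⟩ := CStarAlgebra.nonneg_iff_eq_star_mul_self.mp hA.nonneg
  rw [star_eq_conjTranspose] at h ⊢
  rw [conjTranspose_mul_self_mul_eq_zero, ← conjTranspose_mul_self_eq_zero, conjTranspose_mul,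
    ← h]
  simp only [Matrix.mul_assoc]

variable [DecidableEq n]

theorem IsHermitian.posSemidef_one_add_of_mul_self_eq_one {E : Matrix n n 𝕜}
    (hE : E.IsHermitian) (hEE : E * E = 1) : (1 + E).PosSemidef := by
  have h : (1 + E)ᴴ * (1 + E) = (2 : ℝ) • (1 + E) := by
    rw [conjTranspose_add, conjTranspose_one, hE.eq]
    noncomm_ring; rw [hEE]; module
  have := (posSemidef_conjTranspose_mul_self (1 + E)).smul (a := (2 : ℝ)⁻¹) (by positivity)
  rwa [h, smul_smul, inv_mul_cancel₀ two_ne_zero, one_smul] at this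

theorem eq_zero_of_posSemidef_one_add_add_of_posSemidef_one_sub_add {E θ : Matrix n n 𝕜}
    (hE : E.IsHermitian) (hEE : E * E = 1) (hθ : θ.trace = 0)
    (hplus : (1 + E + θ).PosSemidef) (hminus : (1 - E + θ).PosSemidef) : θ = 0 := by
  have hPQ : (1 + E) * (1 - E) = 0 := by noncomm_ring; rw [hEE]; abel
  have hQP : (1 - E) * (1 + E) = 0 := by noncomm_ring; rw [hEE]; abel
  have hcompr_plus : (1 - E)ᴴ * (1 + E + θ) * (1 - E) = (1 - E) * θ * (1 - E) := by
    rw [conjTranspose_sub, conjTranspose_one, hE.eq, Matrix.mul_add (1 - E), hQP, zero_add]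
  have hcompr_minus : (1 + E)ᴴ * (1 - E + θ) * (1 + E) = (1 + E) * θ * (1 + E) := by
    rw [conjTranspose_add, conjTranspose_one, hE.eq, Matrix.mul_add (1 + E), hPQ, zero_add]
  have htrace : ((1 - E) * θ * (1 - E)).trace + ((1 + E) * θ * (1 + E)).trace = 0 := by
    have : (1 - E) * (1 - E) + (1 + E) * (1 + E) = (4 : 𝕜) • 1 := by
      noncomm_ring; rw [hEE]; module
    rw [trace_mul_cycle, trace_mul_cycle (1 + E), ← trace_add, ← Matrix.add_mul, this]
    simp [hθ]
  have hpsd_plus := hplus.conjTranspose_mul_mul_same (1 - E)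
  have hpsd_minus := hminus.conjTranspose_mul_mul_same (1 + E)
  rw [hcompr_plus] at hpsd_plus
  rw [hcompr_minus] at hpsd_minus
  obtain ⟨htr_plus, htr_minus⟩ :=
    (add_eq_zero_iff_of_nonneg hpsd_plus.trace_nonneg hpsd_minus.trace_nonneg).mp htrace
  have hθQ : θ * (1 - E) = 0 := by
    have := hplus.mul_eq_zero_of_conjTranspose_mul_mul_eq_zero
      (hcompr_plus.trans (hpsd_plus.trace_eq_zero_iff.mp htr_plus))
    rwa [Matrix.add_mul, hPQ, zero_add] at this
  have hθP : θ * (1 + E) = 0 := by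
    have := hminus.mul_eq_zero_of_conjTranspose_mul_mul_eq_zero
      (hcompr_minus.trans (hpsd_minus.trace_eq_zero_iff.mp htr_minus))
    rwa [Matrix.add_mul, hQP, zero_add] at this
  have : (2 : 𝕜) • θ = θ * (1 + E) + θ * (1 - E) := by noncomm_ring; module
  simpa [hθP, hθQ] using this

end Matrix

namespace LinearMap

variable (f : Matrix (Fin 2) (Fin 2) ℂ →ₗ[ℂ] Matrix (Fin 2) (Fin 2) ℂ)

theorem apply_apply_eq_sum_choi (M : Matrix (Fin 2) (Fin 2) ℂ) (a b : Fin 2) :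
    f M a b = ∑ p, ∑ q, M p q * choi (fun M => f M) (p, a) (q, b) := by
  conv_lhs => rw [matrix_eq_sum_single M]
  have (p q : Fin 2) : Matrix.single p q (M p q) = M p q • Matrix.single p q 1 := by
    rw [smul_single, smul_eq_mul, mul_one]
  simp only [this, map_sum, map_smul, Matrix.sum_apply, Matrix.smul_apply, smul_eq_mul, choi,
    of_apply]

theorem exists_apply_vecMulVec_eq_conjTranspose_mul_choi_mul (v : Fin 2 → ℂ) :
    ∃ W : Matrix (Fin 2 × Fin 2) (Fin 2) ℂ,
      f (vecMulVec v (star v)) = Wᴴ * choi (fun M => f M) * W := by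
  -- `W = v̄ ⊗ 1`
  refine ⟨of fun pa b => star (v pa.1) * (1 : Matrix (Fin 2) (Fin 2) ℂ) pa.2 b, ?_⟩
  ext a b
  fin_cases a <;>
    simp [apply_apply_eq_sum_choi, mul_apply, Fintype.sum_prod_type, vecMulVec_apply,
      one_apply] <;>
    ring

theorem posSemidef_apply_of_posSemidef_choi (hf : (choi (fun M => f M)).PosSemidef)
    {M : Matrix (Fin 2) (Fin 2) ℂ} (hM : M.PosSemidef) : (f M).PosSemidef := by
  obtain ⟨m, v, rfl⟩ := posSemidef_iff_eq_sum_vecMulVec.mp hM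
  rw [map_sum]
  refine posSemidef_sum _ fun k _ => ?_
  obtain ⟨W, hW⟩ := f.exists_apply_vecMulVec_eq_conjTranspose_mul_choi_mul (v k)
  exact hW ▸ hf.conjTranspose_mul_mul_same W

end LinearMap

/-- If a family of CPTP qubit maps has at least two distinct fixed density matrices
(i.e. the fixed-point set has affine dimension at least one), then each map of the
family is unital. -/
theorem cptp_qubit_fixed_points_unital {ι : Type*}
    (Λ : ι → (Matrix (Fin 2) (Fin 2) ℂ →ₗ[ℂ] Matrix (Fin 2) (Fin 2) ℂ))
    (hCP : ∀ i, (choi (fun M => Λ i M)).PosSemidef)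
    (hTP : ∀ i M, ((Λ i) M).trace = M.trace)
    (ρ₁ ρ₂ : Matrix (Fin 2) (Fin 2) ℂ)
    (hρ₁ : IsDensity ρ₁) (hρ₂ : IsDensity ρ₂) (hne : ρ₁ ≠ ρ₂)
    (hfix₁ : ∀ i, Λ i ρ₁ = ρ₁) (hfix₂ : ∀ i, Λ i ρ₂ = ρ₂) :
    ∀ i, Λ i 1 = 1 := by
  intro i
  have hδ : (ρ₁ - ρ₂).IsHermitian := hρ₁.1.1.sub hρ₂.1.1
  have htr : (ρ₁ - ρ₂).trace = 0 := by rw [trace_sub, hρ₁.2, hρ₂.2, sub_self]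
  obtain ⟨r, hEE⟩ := hδ.exists_smul_mul_self_eq_one htr (sub_ne_zero.mpr hne)
  set E := r • (ρ₁ - ρ₂)
  have hE : E.IsHermitian := hδ.smul (IsSelfAdjoint.all r)
  have hEfix : Λ i E = E := by rw [LinearMap.map_smul_of_tower, map_sub, hfix₁, hfix₂]
  have hθ : (Λ i 1 - 1).trace = 0 := by rw [trace_sub, hTP, sub_self]
  have hshift (F : Matrix (Fin 2) (Fin 2) ℂ) (hF : Λ i F = F) :
      Λ i (1 + F) = 1 + F + (Λ i 1 - 1) := by rw [map_add, hF]; abel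
  have hpos {M : Matrix (Fin 2) (Fin 2) ℂ} (hM : M.PosSemidef) : (Λ i M).PosSemidef :=
    (Λ i).posSemidef_apply_of_posSemidef_choi (hCP i) hM
  refine sub_eq_zero.mp (eq_zero_of_posSemidef_one_add_add_of_posSemidef_one_sub_add hE hEE hθ
    ?_ ?_)
  · exact hshift E hEfix ▸ hpos (hE.posSemidef_one_add_of_mul_self_eq_one hEE)
  · rw [sub_eq_add_neg, ← hshift (-E) (by rw [map_neg, hEfix])]
    exact hpos (hE.neg.posSemidef_one_add_of_mul_self_eq_one (by rwa [neg_mul_neg]))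
end

section
/- Let ρ be a rank-one positive semidefinite trace-one matrix and let P_0 be the projector onto its kernel. For the GKSL dissipator D(ρ) = Σ_k (G_k ρ G_k† − (1/2){G_k†G_k, ρ}), the compression P_0 D(ρ) P_0 is positive semidefinite, and it equals zero for every rank-one ρ if and only if each G_k is proportional to the identity (in which case D vanishes identically). Moreover P_0 [H, ρ] P_0 = 0 for any Hermitian H. -/
/-!
Because `ρ = ψψ†` is a star projection, `P₀ = 1 - ρ` kills `ρ` from both sides, so the
compression by `P₀` annihilates every commutator `[H, ρ]` and every anticommutator `{G†G, ρ}`.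
What survives of the dissipator is `∑ₖ P₀ Gₖ ρ Gₖ† P₀ = ∑ₖ wₖ wₖ†` with `wₖ = P₀ Gₖ ψ`, a positive
semidefinite matrix whose trace `∑ₖ ‖wₖ‖²` vanishes only if every `wₖ = 0`. Requiring this for all
unit `ψ` makes every vector an eigenvector of `Gₖ`, so `Gₖ` is scalar, and scalar jump operators
give a vanishing dissipator.
-/

open Matrix BigOperators ComplexOrder

section Algebra
variable {A : Type*} [Ring A] {P ρ : A}

theorem mul_commutator_mul_eq_zero (hPρ : P * ρ = 0) (hρP : ρ * P = 0) (H : A) :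
    P * (H * ρ - ρ * H) * P = 0 := by
  simp only [mul_sub, sub_mul, ← mul_assoc, hPρ, zero_mul]
  simp only [mul_assoc, hρP, mul_zero, sub_zero]

theorem mul_anticommutator_mul_eq_zero (hPρ : P * ρ = 0) (hρP : ρ * P = 0) (Y : A) :
    P * (Y * ρ + ρ * Y) * P = 0 := by
  simp only [mul_add, add_mul, ← mul_assoc, hPρ, zero_mul]
  simp only [mul_assoc, hρP, mul_zero, add_zero]

end Algebra

section Matrix
variable {n R : Type*} [Fintype n]

theorem isStarProjection_vecMulVec_star [CommRing R] [StarRing R] {ψ : n → R}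
    (hψ : star ψ ⬝ᵥ ψ = 1) : IsStarProjection (vecMulVec ψ (star ψ)) where
  isIdempotentElem := by
    rw [IsIdempotentElem, vecMulVec_mul_vecMulVec, hψ, one_smul]
  isSelfAdjoint := by
    rw [IsSelfAdjoint, star_eq_conjTranspose, conjTranspose_vecMulVec, star_star]

theorem mul_vecMulVec_star_mul_conjTranspose {m : Type*} [CommRing R] [StarRing R]
    (M : Matrix m n R) (ψ : n → R) :
    M * vecMulVec ψ (star ψ) * Mᴴ = vecMulVec (M *ᵥ ψ) (star (M *ᵥ ψ)) := by
  rw [mul_vecMulVec, vecMulVec_mul, star_mulVec]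

theorem one_sub_vecMulVec_star_mulVec [DecidableEq n] [CommRing R] [StarRing R] (ψ x : n → R) :
    (1 - vecMulVec ψ (star ψ)) *ᵥ x = x - (star ψ ⬝ᵥ x) • ψ := by
  rw [sub_mulVec, one_mulVec, vecMulVec_mulVec, op_smul_eq_smul]

theorem sum_vecMulVec_self_star_eq_zero_iff {ι : Type*} [Ring R] [PartialOrder R] [StarRing R]
    [StarOrderedRing R] [NoZeroDivisors R] (s : Finset ι) (w : ι → n → R) :
    ∑ i ∈ s, vecMulVec (w i) (star (w i)) = 0 ↔ ∀ i ∈ s, w i = 0 := by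
  refine ⟨fun h => ?_, fun h => Finset.sum_eq_zero fun i hi => by rw [h i hi, zero_vecMulVec]⟩
  have htrace := congrArg trace h
  rw [trace_sum, trace_zero] at htrace
  simp only [trace_vecMulVec] at htrace
  intro i hi
  exact dotProduct_self_star_eq_zero.mp
    ((Finset.sum_eq_zero_iff_of_nonneg fun j _ => dotProduct_self_star_nonneg (w j)).mp htrace i hi)

theorem exists_eq_smul_one_of_forall_mulVec_eq_smul [DecidableEq n] {K : Type*} [Field K]
    {M : Matrix n n K} (h : ∀ v, ∃ c : K, M *ᵥ v = c • v) : ∃ c : K, M = c • 1 := by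
  obtain ⟨c, hc⟩ := (toLin' M).exists_eq_smul_id_of_forall_notLinearIndependent fun v => by
    by_cases hv : v = 0
    · simp [hv, linearIndependent_fin2]
    · obtain ⟨μ, hμ⟩ := h v
      rw [LinearIndependent.pair_iff' hv, not_forall_not]
      exact ⟨μ, by simp [hμ]⟩
  refine ⟨c, ?_⟩
  apply toLin'.injective
  rw [hc, map_smul, toLin'_one]
  rfl

theorem exists_smul_star_dotProduct_eq_one {𝕜 : Type*} [RCLike 𝕜] {v : n → 𝕜} (hv : v ≠ 0) :
    ∃ c : 𝕜, c ≠ 0 ∧ star (c • v) ⬝ᵥ (c • v) = 1 := by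
  set r := ‖WithLp.toLp 2 v‖
  have hr : (r : 𝕜) ≠ 0 := by simpa [r] using hv
  have hnorm : star v ⬝ᵥ v = (r : 𝕜) ^ 2 := by
    rw [dotProduct_comm, ← EuclideanSpace.inner_toLp_toLp, inner_self_eq_norm_sq_to_K]
  refine ⟨(r : 𝕜)⁻¹, inv_ne_zero hr, ?_⟩
  rw [star_smul, smul_dotProduct, dotProduct_smul, hnorm, smul_eq_mul, smul_eq_mul]
  simp only [RCLike.star_def, map_inv₀, RCLike.conj_ofReal]
  field_simp

theorem exists_eq_smul_one_of_forall_star_dotProduct_eq_one [DecidableEq n] {𝕜 : Type*}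
    [RCLike 𝕜] {M : Matrix n n 𝕜} (h : ∀ ψ, star ψ ⬝ᵥ ψ = 1 → ∃ c : 𝕜, M *ᵥ ψ = c • ψ) :
    ∃ c : 𝕜, M = c • 1 := by
  refine exists_eq_smul_one_of_forall_mulVec_eq_smul fun v => ?_
  rcases eq_or_ne v 0 with rfl | hv
  · exact ⟨0, by simp⟩
  obtain ⟨a, ha, hunit⟩ := exists_smul_star_dotProduct_eq_one hv
  obtain ⟨c, hc⟩ := h _ hunit
  refine ⟨c, smul_right_injective _ ha ?_⟩
  simpa only [mulVec_smul, smul_comm a c] using hc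

def lindbladTerm [Field R] [StarRing R] (G M : Matrix n n R) : Matrix n n R :=
  G * M * Gᴴ - (1 / 2 : R) • (Gᴴ * G * M + M * (Gᴴ * G))

theorem lindbladTerm_smul_one [DecidableEq n] [Field R] [StarRing R] [CharZero R] (c : R)
    (M : Matrix n n R) :
    lindbladTerm (c • 1) M = 0 := by
  simp only [lindbladTerm, conjTranspose_smul, conjTranspose_one, smul_mul_assoc, mul_smul_comm,
    one_mul, mul_one, smul_smul, mul_comm c (star c), ← add_smul]
  rw [sub_eq_zero]
  congr 1
  ring

theorem one_sub_mul_lindbladTerm_mul_one_sub [DecidableEq n] [Field R] [StarRing R]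
    {p : Matrix n n R} (hp : IsStarProjection p) (G : Matrix n n R) :
    (1 - p) * lindbladTerm G p * (1 - p) = (1 - p) * G * p * ((1 - p) * G)ᴴ := by
  rw [lindbladTerm, mul_sub (1 - p), sub_mul _ _ (1 - p), mul_smul_comm, smul_mul_assoc,
    mul_anticommutator_mul_eq_zero hp.one_sub_mul_self hp.mul_one_sub_self, smul_zero, sub_zero,
    conjTranspose_mul, ← star_eq_conjTranspose (1 - p), hp.one_sub.isSelfAdjoint.star_eq]
  simp only [mul_assoc]

theorem one_sub_mul_sum_lindbladTerm_mul_one_sub [DecidableEq n] {ι : Type*} [Field R]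
    [StarRing R] {ψ : n → R} (hψ : star ψ ⬝ᵥ ψ = 1) (s : Finset ι) (G : ι → Matrix n n R) :
    (1 - vecMulVec ψ (star ψ)) * (∑ k ∈ s, lindbladTerm (G k) (vecMulVec ψ (star ψ)))
        * (1 - vecMulVec ψ (star ψ)) =
      ∑ k ∈ s, vecMulVec ((1 - vecMulVec ψ (star ψ)) *ᵥ (G k *ᵥ ψ))
        (star ((1 - vecMulVec ψ (star ψ)) *ᵥ (G k *ᵥ ψ))) := by
  rw [Finset.mul_sum, Finset.sum_mul]
  refine Finset.sum_congr rfl fun k _ => ?_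
  rw [one_sub_mul_lindbladTerm_mul_one_sub (isStarProjection_vecMulVec_star hψ),
    mul_vecMulVec_star_mul_conjTranspose, mulVec_mulVec]

end Matrix

/-- For a rank-one positive semidefinite trace-one matrix `ρ = |ψ⟩⟨ψ|` with kernel
projector `P₀ = 1 - ρ`, and the GKSL dissipator
`D(ρ) = ∑_k (G_k ρ G_k† - (1/2){G_k†G_k, ρ})`:
the compression `P₀ D(ρ) P₀` is positive semidefinite and
`P₀ [H, ρ] P₀ = 0` for every Hermitian `H`; moreover `P₀ D(ρ) P₀ = 0` for every
rank-one `ρ` iff each `G_k` is proportional to the identity, in which case `D`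
vanishes identically. -/
theorem dissipator_kernel_compression (d m : ℕ)
    (G : Fin m → Matrix (Fin d) (Fin d) ℂ)
    (D : Matrix (Fin d) (Fin d) ℂ → Matrix (Fin d) (Fin d) ℂ)
    (hD : ∀ M, D M = ∑ k, (G k * M * (G k)ᴴ
        - (1/2 : ℂ) • ((G k)ᴴ * G k * M + M * ((G k)ᴴ * G k)))) :
    (∀ ψ : Fin d → ℂ, star ψ ⬝ᵥ ψ = 1 →
      (((1 - vecMulVec ψ (star ψ)) * D (vecMulVec ψ (star ψ))
          * (1 - vecMulVec ψ (star ψ))).PosSemidef ∧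
        ∀ H : Matrix (Fin d) (Fin d) ℂ, H.IsHermitian →
          (1 - vecMulVec ψ (star ψ))
            * (H * vecMulVec ψ (star ψ) - vecMulVec ψ (star ψ) * H)
            * (1 - vecMulVec ψ (star ψ)) = 0)) ∧
    ((∀ ψ : Fin d → ℂ, star ψ ⬝ᵥ ψ = 1 →
        (1 - vecMulVec ψ (star ψ)) * D (vecMulVec ψ (star ψ))
          * (1 - vecMulVec ψ (star ψ)) = 0) ↔
      ∀ k, ∃ c : ℂ, G k = c • (1 : Matrix (Fin d) (Fin d) ℂ)) ∧
    ((∀ k, ∃ c : ℂ, G k = c • (1 : Matrix (Fin d) (Fin d) ℂ)) → ∀ M, D M = 0) := by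
  replace hD : ∀ M, D M = ∑ k, lindbladTerm (G k) M := hD
  have compress (ψ : Fin d → ℂ) (hψ : star ψ ⬝ᵥ ψ = 1) := hD _ ▸
    one_sub_mul_sum_lindbladTerm_mul_one_sub hψ Finset.univ G
  have vanish (hG : ∀ k, ∃ c : ℂ, G k = c • (1 : Matrix (Fin d) (Fin d) ℂ)) (M) : D M = 0 := by
    rw [hD]
    refine Finset.sum_eq_zero fun k _ => ?_
    obtain ⟨c, hc⟩ := hG k
    rw [hc, lindbladTerm_smul_one]
  refine ⟨fun ψ hψ => ⟨?_, fun H _ => ?_⟩,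
    ⟨fun h k => ?_, fun hG ψ _ => by rw [vanish hG, mul_zero, zero_mul]⟩, vanish⟩
  · rw [compress ψ hψ]
    exact posSemidef_sum _ fun k _ => posSemidef_vecMulVec_self_star _
  · have hρ := isStarProjection_vecMulVec_star hψ
    exact mul_commutator_mul_eq_zero hρ.one_sub_mul_self hρ.mul_one_sub_self H
  · refine exists_eq_smul_one_of_forall_star_dotProduct_eq_one fun ψ hψ =>
      ⟨star ψ ⬝ᵥ (G k *ᵥ ψ), ?_⟩
    have hw := (sum_vecMulVec_self_star_eq_zero_iff _ _).mp
      ((compress ψ hψ).symm.trans (h ψ hψ)) k (Finset.mem_univ k)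
    rwa [one_sub_vecMulVec_star_mulVec, sub_eq_zero] at hw
end
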